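/- arXiv:2003.09297 — 7 statements merged into one kernel-verified Lean document; each statement's English description precedes it below -/
import Mathlib

section
/- Suppose a sequence of vectors z(t) ∈ ℝ^{⌊n/2⌋} satisfies: n·z_1(t+1) = (n - 5/2)·z_1(t) + z_2(t), and for 2 ≤ i ≤ ⌊n/2⌋, n·z_i(t+1) = -z_1(t) + z_{i-1}(t) + (n-2)·z_i(t) + z_{i+1}(t) (with the convention z_{⌊n/2⌋+1}(t) = z_{⌈n/2⌉-1}(t)). If 0 ≤ z_1(0) ≤ z_2(0) ≤ … ≤ z_{⌊n/2⌋}(0), then for all t ≥ 0 we have 0 ≤ z_1(t) ≤ z_2(t) ≤ … ≤ z_{⌊n/2⌋}(t). -/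
/-!
Write `Δᵢ = zᵢ₊₁ - zᵢ`. Subtracting consecutive equations of the recursion gives
`n Δᵢ(t+1) = (n - 3) Δᵢ(t) + (zᵢ - zᵢ₋₁)(t) + (zᵢ₊₂ - zᵢ)(t)` for `i ≥ 2`, and
`n Δ₁(t+1) = (n - 3) Δ₁(t) + (z₃ - z₁)(t) + z₁(t) / 2`, while `n z₁(t+1) = (n - 5/2) z₁(t) + z₂(t)`.
All right-hand sides are nonnegative combinations of quantities that are nonnegative when `z(t)` is
sorted and nonnegative; the reflected coordinate `z_{m+1} = z_{⌈n/2⌉-1}` is at least `z_{m-1}`.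
-/

open Set

def SortedNonneg (m : ℕ) (x : ℕ → ℝ) : Prop :=
  0 ≤ x 1 ∧ ∀ i, 1 ≤ i → i < m → x i ≤ x (i + 1)

/-- One step `x ↦ y` of the recursion, with `c` in the role of `n`; the value `x (m + 1)` is left
free here and only controlled through `x (m - 1) ≤ x (m + 1)`. -/
structure RecursionStep (c : ℝ) (m : ℕ) (x y : ℕ → ℝ) : Prop where
  first : c * y 1 = (c - 5 / 2) * x 1 + x 2
  interior : ∀ i, 2 ≤ i → i ≤ m → c * y i = -x 1 + x (i - 1) + (c - 2) * x i + x (i + 1)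

variable {c : ℝ} {m : ℕ} {x y : ℕ → ℝ}

namespace SortedNonneg

theorem monotoneOn (hx : SortedNonneg m x) : MonotoneOn x (Icc 1 m) :=
  monotoneOn_of_le_add_one ordConnected_Icc fun i _ hi hi' => hx.2 i hi.1 hi'.2

theorem le_add_two (hx : SortedNonneg m x) (hwrap : x (m - 1) ≤ x (m + 1)) {i : ℕ}
    (hi : 1 ≤ i) (him : i + 2 ≤ m + 1) : x i ≤ x (i + 2) := by
  rcases him.eq_or_lt with h | h
  · obtain rfl : i = m - 1 := by omega
    rwa [h]
  · exact hx.monotoneOn ⟨hi, by omega⟩ ⟨by omega, by omega⟩ (by omega)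

end SortedNonneg

namespace RecursionStep

theorem nonneg_one (h : RecursionStep c m x y) (hc : 5 / 2 ≤ c) (hm : 2 ≤ m)
    (hx : SortedNonneg m x) : 0 ≤ y 1 := by
  have hx12 : x 1 ≤ x 2 := hx.2 1 le_rfl hm
  refine (mul_nonneg_iff_of_pos_left (show 0 < c by linarith)).mp ?_
  rw [h.first]
  have := mul_nonneg (sub_nonneg.mpr hc) hx.1
  linarith [hx.1]

theorem one_le_two (h : RecursionStep c m x y) (hc : 3 ≤ c) (hm : 2 ≤ m)
    (hx : SortedNonneg m x) (hwrap : x (m - 1) ≤ x (m + 1)) : y 1 ≤ y 2 := by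
  have hdiff : c * (y 2 - y 1) = (c - 3) * (x 2 - x 1) + (x 3 - x 1) + x 1 / 2 := by
    linear_combination h.interior 2 le_rfl hm - h.first
  have hx12 : x 1 ≤ x 2 := hx.2 1 le_rfl hm
  have hx13 : x 1 ≤ x 3 := hx.le_add_two hwrap le_rfl (by omega)
  refine sub_nonneg.mp <| (mul_nonneg_iff_of_pos_left (show 0 < c by linarith)).mp ?_
  rw [hdiff]
  have := mul_nonneg (sub_nonneg.mpr hc) (sub_nonneg.mpr hx12)
  linarith [hx.1]

theorem le_succ (h : RecursionStep c m x y) (hc : 3 ≤ c) (hx : SortedNonneg m x)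
    (hwrap : x (m - 1) ≤ x (m + 1)) {i : ℕ} (hi : 2 ≤ i) (him : i < m) : y i ≤ y (i + 1) := by
  have hdiff : c * (y (i + 1) - y i) =
      (c - 3) * (x (i + 1) - x i) + (x i - x (i - 1)) + (x (i + 2) - x i) := by
    have := h.interior (i + 1) (by omega) him
    rw [Nat.add_sub_cancel] at this
    linear_combination this - h.interior i hi him.le
  have hx_prev : x (i - 1) ≤ x i := by
    simpa [Nat.sub_add_cancel (by omega : 1 ≤ i)] using hx.2 (i - 1) (by omega) (by omega)
  have hx_succ : x i ≤ x (i + 1) := hx.2 i (by omega) him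
  have hx_add_two : x i ≤ x (i + 2) := hx.le_add_two hwrap (by omega) (by omega)
  refine sub_nonneg.mp <| (mul_nonneg_iff_of_pos_left (show 0 < c by linarith)).mp ?_
  rw [hdiff]
  have := mul_nonneg (sub_nonneg.mpr hc) (sub_nonneg.mpr hx_succ)
  linarith

theorem sortedNonneg (h : RecursionStep c m x y) (hc : 3 ≤ c) (hm : 2 ≤ m)
    (hx : SortedNonneg m x) (hwrap : x (m - 1) ≤ x (m + 1)) : SortedNonneg m y := by
  refine ⟨h.nonneg_one (by linarith) hm hx, fun i hi him => ?_⟩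
  rcases hi.eq_or_lt with rfl | hi
  · exact h.one_le_two hc (by omega) hx hwrap
  · exact h.le_succ hc hx hwrap hi him

end RecursionStep

/-- Monotone invariance: the linear recursion preserves sorted nonnegativity. -/
theorem stmt3 (n : ℕ) (hn : 5 ≤ n) (m : ℕ) (hm : m = n / 2)
    (z : ℕ → ℕ → ℝ)
    (hconv : ∀ t, z t (m + 1) = z t ((n + 1) / 2 - 1))
    (h1 : ∀ t, (n : ℝ) * z (t+1) 1 = ((n : ℝ) - 5/2) * z t 1 + z t 2)
    (hi : ∀ t i, 2 ≤ i → i ≤ m →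
      (n : ℝ) * z (t+1) i = -(z t 1) + z t (i-1) + ((n : ℝ) - 2) * z t i + z t (i+1))
    (h0 : 0 ≤ z 0 1 ∧ ∀ i, 1 ≤ i → i < m → z 0 i ≤ z 0 (i+1)) :
    ∀ t, 0 ≤ z t 1 ∧ ∀ i, 1 ≤ i → i < m → z t i ≤ z t (i+1) := by
  have hn3 : (3 : ℝ) ≤ n := by exact_mod_cast (by omega : 3 ≤ n)
  have hm2 : 2 ≤ m := by omega
  have hwrap (t : ℕ) (hz : SortedNonneg m (z t)) : z t (m - 1) ≤ z t (m + 1) := by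
    rw [hconv t]
    exact hz.monotoneOn ⟨by omega, by omega⟩ ⟨by omega, by omega⟩ (by omega)
  intro t
  induction t with
  | zero => exact h0
  | succ t ih => exact (RecursionStep.mk (h1 t) (hi t)).sortedNonneg hn3 hm2 ih (hwrap t ih)
end

section
/- Under the linear recursion for z(t) and assuming coordinates are sorted and nonnegative at every step, for every 1 ≤ i ≤ ⌊n/2⌋ - 1 and every t, z_i(t+1) ≥ z_{i+1}(t)/n. Consequently z_1(t + ⌊n/2⌋) ≥ (1/n)^{⌊n/2⌋ - 1} · z_{⌊n/2⌋}(t+1). -/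
/-!
Only the sign pattern of the recursion matters. In `n z_i(t+1) = (z_{i-1} - z_1) + (n - 2) z_i + z_{i+1}`
every term other than `z_{i+1}` is nonnegative once the row is sorted and nonnegative (and likewise
`(n - 5/2) z_1 ≥ 0` in the first row), so `z_i(t+1) ≥ z_{i+1}(t) / n`. Chaining this bound diagonally,
from `(t + 1, m)` down to `(t + m, 1)`, loses a factor `1/n` per step.
-/

open Set

lemma monotoneOn_Icc_of_le_succ {m : ℕ} {x : ℕ → ℝ}
    (hx : ∀ i, 1 ≤ i → i < m → x i ≤ x (i + 1)) : MonotoneOn x (Icc 1 m) :=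
  monotoneOn_of_le_succ ordConnected_Icc fun i _ hi hi' =>
    hx i hi.1 (Nat.succ_le_iff.mp hi'.2)

lemma div_le_of_recurrence {n : ℝ} (hn : 5 / 2 ≤ n) {m : ℕ} {x y : ℕ → ℝ}
    (hx0 : 0 ≤ x 1) (hx : MonotoneOn x (Icc 1 m))
    (h1 : n * y 1 = (n - 5 / 2) * x 1 + x 2)
    (hi : ∀ i, 2 ≤ i → i ≤ m → n * y i = -x 1 + x (i - 1) + (n - 2) * x i + x (i + 1))
    {i : ℕ} (hi1 : 1 ≤ i) (him : i < m) : x (i + 1) / n ≤ y i := by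
  rw [div_le_iff₀ (by linarith)]
  obtain rfl | hi2 := hi1.eq_or_lt
  · nlinarith
  · have hx1 : x 1 ≤ x (i - 1) := hx ⟨le_rfl, by omega⟩ ⟨by omega, by omega⟩ (by omega)
    have hxi : 0 ≤ x i := hx0.trans (hx ⟨le_rfl, by omega⟩ ⟨hi1, him.le⟩ hi1)
    nlinarith [hi i hi2 him.le]

lemma pow_mul_le_of_le_mul_succ {c : ℝ} (hc : 0 ≤ c) {m : ℕ} {z : ℕ → ℕ → ℝ}
    (h : ∀ t i, 1 ≤ i → i < m → c * z t (i + 1) ≤ z (t + 1) i) (s k i : ℕ)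
    (hi : 1 ≤ i) (hik : i + k ≤ m) : c ^ k * z s (i + k) ≤ z (s + k) i := by
  induction k generalizing i with
  | zero => simp
  | succ k ih =>
    calc c ^ (k + 1) * z s (i + (k + 1))
        = c * (c ^ k * z s ((i + 1) + k)) := by
          rw [show i + (k + 1) = i + 1 + k by omega, pow_succ]; ring
      _ ≤ c * z (s + k) (i + 1) := by gcongr; exact ih (i + 1) (by omega) (by omega)
      _ ≤ z (s + (k + 1)) i := h (s + k) i hi (by omega)

theorem stmt5_general (n : ℕ) (hn : 5 ≤ n) (m : ℕ) (hm : m = n / 2)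
    (z : ℕ → ℕ → ℝ)
    (h1 : ∀ t, (n : ℝ) * z (t+1) 1 = ((n : ℝ) - 5/2) * z t 1 + z t 2)
    (hi : ∀ t i, 2 ≤ i → i ≤ m →
      (n : ℝ) * z (t+1) i = -(z t 1) + z t (i-1) + ((n : ℝ) - 2) * z t i + z t (i+1))
    (hsorted : ∀ t, 0 ≤ z t 1 ∧ ∀ i, 1 ≤ i → i < m → z t i ≤ z t (i+1)) :
    (∀ t i, 1 ≤ i → i ≤ m - 1 → z (t+1) i ≥ z t (i+1) / n) ∧
    (∀ t, z (t + m) 1 ≥ (1 / (n : ℝ))^(m-1) * z (t+1) m) := by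
  have hn' : (5 / 2 : ℝ) ≤ n := by
    have : (5 : ℝ) ≤ n := by exact_mod_cast hn
    linarith
  have step (t i : ℕ) (hi1 : 1 ≤ i) (him : i < m) : z t (i + 1) / n ≤ z (t + 1) i :=
    div_le_of_recurrence hn' (hsorted t).1 (monotoneOn_Icc_of_le_succ (hsorted t).2)
      (h1 t) (hi t) hi1 him
  refine ⟨fun t i hi1 him => step t i hi1 (by omega), fun t => ?_⟩
  have diagonal := pow_mul_le_of_le_mul_succ (by positivity)
    (fun t i hi1 him => (one_div_mul_eq_div _ _).le.trans (step t i hi1 him)) (t + 1) (m - 1) 1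
    le_rfl (by omega)
  rwa [show 1 + (m - 1) = m by omega, show t + 1 + (m - 1) = t + m by omega] at diagonal

/-- Lower-bound propagation: z_i(t+1) ≥ z_{i+1}(t)/n, and its iterated consequence. -/
theorem stmt5 (n : ℕ) (hn : 5 ≤ n) (m : ℕ) (hm : m = n / 2)
    (z : ℕ → ℕ → ℝ)
    (hconv : ∀ t, z t (m + 1) = z t ((n + 1) / 2 - 1))
    (h1 : ∀ t, (n : ℝ) * z (t+1) 1 = ((n : ℝ) - 5/2) * z t 1 + z t 2)
    (hi : ∀ t i, 2 ≤ i → i ≤ m →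
      (n : ℝ) * z (t+1) i = -(z t 1) + z t (i-1) + ((n : ℝ) - 2) * z t i + z t (i+1))
    (hsorted : ∀ t, 0 ≤ z t 1 ∧ ∀ i, 1 ≤ i → i < m → z t i ≤ z t (i+1)) :
    (∀ t i, 1 ≤ i → i ≤ m - 1 → z (t+1) i ≥ z t (i+1) / n) ∧
    (∀ t, z (t + m) 1 ≥ (1 / (n : ℝ))^(m-1) * z (t+1) m) :=
  stmt5_general n hn m hm z h1 hi hsorted
end

section
/- For a cycle of length n = 2^m and load vector x : ZMod n → ℝ, define for a finite nonempty set A ⊆ ZMod n, Gap_A(x) = max_{i∈A} x(i) - min_{i∈A} x(i), and A_k^i = {i + j·2^k : 0 ≤ j < 2^{m-k}}. Then for all i and 1 ≤ k ≤ m: 2·Gap_{A_{k-1}^i}(x) ≤ 2·max_{j ∈ A_{k-1}^i} |x(j) - x(j + 2^{k-1})| + Gap_{A_k^{i + 2^{k-1}}}(x) + Gap_{A_k^i}(x). -/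
/-!
Write `d = 2^(k-1)`. The progression `A_{k-1}^i` is the union of `S = A_k^i` and
`T = A_k^{i+d}`, and translation by `d` maps `S` into `T` and `T` into `S`. Hence every
`j ∈ A_{k-1}^i` has a partner `j + d` in the other half, at distance at most
`D = max |x j - x (j + d)|`, so `2 x j ≤ max_S x + max_T x + D` and
`2 x j ≥ min_S x + min_T x - D`. Subtracting these at the maximiser and the minimiser of `x`
on `A_{k-1}^i` gives the inequality.
-/

open Finset

section SwapShift

variable {α : Type*} (x : α → ℝ) (σ : α → α) {S T : Finset α} (hS : S.Nonempty)
  (hT : T.Nonempty)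

lemma two_mul_le_sup'_add_sup'_add_abs {j : α} (hj : j ∈ S) (hσj : σ j ∈ T) :
    2 * x j ≤ S.sup' hS x + T.sup' hT x + |x j - x (σ j)| := by
  have := le_sup' x hj
  have := le_sup' x hσj
  have := le_abs_self (x j - x (σ j))
  linarith

lemma inf'_add_inf'_sub_abs_le_two_mul {j : α} (hj : j ∈ S) (hσj : σ j ∈ T) :
    S.inf' hS x + T.inf' hT x - |x j - x (σ j)| ≤ 2 * x j := by
  have := inf'_le x hj
  have := inf'_le x hσj
  have := neg_abs_le (x j - x (σ j))
  linarith

theorem two_mul_gap_le_of_mapsTo_swap [DecidableEq α] {U : Finset α} (hU : U.Nonempty) (hcover : U ⊆ S ∪ T)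
    (hST : ∀ j ∈ S, σ j ∈ T) (hTS : ∀ j ∈ T, σ j ∈ S) :
    2 * (U.sup' hU x - U.inf' hU x) ≤
      2 * U.sup' hU (fun j => |x j - x (σ j)|) + (T.sup' hT x - T.inf' hT x) +
        (S.sup' hS x - S.inf' hS x) := by
  set D := U.sup' hU (fun j => |x j - x (σ j)|)
  have hD : ∀ j ∈ U, |x j - x (σ j)| ≤ D := fun j hj => le_sup' (fun j => |x j - x (σ j)|) hj
  have upper : ∀ j ∈ U, 2 * x j ≤ S.sup' hS x + T.sup' hT x + D := by
    intro j hj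
    rcases mem_union.1 (hcover hj) with hjS | hjT
    · linarith [two_mul_le_sup'_add_sup'_add_abs x σ hS hT hjS (hST j hjS), hD j hj]
    · linarith [two_mul_le_sup'_add_sup'_add_abs x σ hT hS hjT (hTS j hjT), hD j hj]
  have lower : ∀ j ∈ U, S.inf' hS x + T.inf' hT x - D ≤ 2 * x j := by
    intro j hj
    rcases mem_union.1 (hcover hj) with hjS | hjT
    · linarith [inf'_add_inf'_sub_abs_le_two_mul x σ hS hT hjS (hST j hjS), hD j hj]
    · linarith [inf'_add_inf'_sub_abs_le_two_mul x σ hT hS hjT (hTS j hjT), hD j hj]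
  obtain ⟨a, ha, hxa⟩ := exists_mem_eq_sup' hU x
  obtain ⟨b, hb, hxb⟩ := exists_mem_eq_inf' hU x
  linarith [upper a ha, lower b hb]

end SwapShift

lemma ZMod.mem_image_range_iff_exists_eq_add_mul {n N d : ℕ} (hNd : N * d = n) (hN : 0 < N)
    {i j : ZMod n} :
    j ∈ (range N).image (fun t : ℕ => i + ((t * d : ℕ) : ZMod n)) ↔ ∃ t : ℕ, j = i + t * d := by
  simp only [mem_image, mem_range]
  constructor
  · rintro ⟨t, -, rfl⟩
    exact ⟨t, by push_cast; ring⟩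
  · rintro ⟨t, rfl⟩
    refine ⟨t % N, Nat.mod_lt t hN, ?_⟩
    have hNd_zero : (N : ZMod n) * d = 0 := by rw [← Nat.cast_mul, hNd, ZMod.natCast_self]
    conv_rhs => rw [← Nat.mod_add_div t N]
    push_cast
    linear_combination (-(t / N : ℕ) : ZMod n) * hNd_zero

lemma exists_eq_add_mul_two_mul_or {R : Type*} [CommSemiring R] {i j d : R}
    (h : ∃ t : ℕ, j = i + t * d) :
    (∃ s : ℕ, j = i + s * (2 * d)) ∨ ∃ s : ℕ, j = i + d + s * (2 * d) := by
  obtain ⟨t, rfl⟩ := h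
  rcases Nat.even_or_odd' t with ⟨s, rfl | rfl⟩
  · exact Or.inl ⟨s, by push_cast; ring⟩
  · exact Or.inr ⟨s, by push_cast; ring⟩

theorem stmt7_general (m : ℕ) (x : ZMod (2^m) → ℝ)
    (A : ℕ → ZMod (2^m) → Finset (ZMod (2^m)))
    (hA : ∀ k i, A k i
      = Finset.image (fun j : ℕ => i + ((j * 2^k : ℕ) : ZMod (2^m))) (Finset.range (2^(m-k))))
    (hne : ∀ k i, (A k i).Nonempty)
    (i : ZMod (2^m)) (k : ℕ) (hk1 : 1 ≤ k) (hk2 : k ≤ m) :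
    2 * ((A (k-1) i).sup' (hne _ _) x - (A (k-1) i).inf' (hne _ _) x) ≤
      2 * (A (k-1) i).sup' (hne _ _) (fun j => |x j - x (j + ((2^(k-1) : ℕ) : ZMod (2^m)))|) +
      ((A k (i + ((2^(k-1) : ℕ) : ZMod (2^m)))).sup' (hne _ _) x
        - (A k (i + ((2^(k-1) : ℕ) : ZMod (2^m)))).inf' (hne _ _) x) +
      ((A k i).sup' (hne _ _) x - (A k i).inf' (hne _ _) x) := by
  set d : ZMod (2^m) := ((2^(k-1) : ℕ) : ZMod (2^m)) with hd
  have hmem : ∀ k' ≤ m, ∀ c j, j ∈ A k' c ↔ ∃ t : ℕ, j = c + t * ((2^k' : ℕ) : ZMod (2^m)) :=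
    fun k' hk' c j => by
      rw [hA]
      exact ZMod.mem_image_range_iff_exists_eq_add_mul
        (by rw [← pow_add, Nat.sub_add_cancel hk']) (by positivity)
  have hstep : ((2^k : ℕ) : ZMod (2^m)) = 2 * d := by
    rw [hd, ← mul_pow_sub_one (by omega : k ≠ 0), Nat.cast_mul, Nat.cast_ofNat]
  have hmem_k : ∀ c j, j ∈ A k c ↔ ∃ t : ℕ, j = c + t * (2 * d) := by
    simpa only [hstep] using hmem k hk2
  apply two_mul_gap_le_of_mapsTo_swap x (· + d)
  · intro j hj
    rcases exists_eq_add_mul_two_mul_or ((hmem (k-1) (by omega) i j).1 hj) with hS | hT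
    · exact mem_union_left _ ((hmem_k i j).2 hS)
    · exact mem_union_right _ ((hmem_k (i + d) j).2 hT)
  · rintro j hj
    obtain ⟨t, rfl⟩ := (hmem_k i j).1 hj
    exact (hmem_k (i + d) _).2 ⟨t, by ring⟩
  · rintro j hj
    obtain ⟨t, rfl⟩ := (hmem_k (i + d) j).1 hj
    exact (hmem_k i _).2 ⟨t + 1, by push_cast; ring⟩

/-- Gap covering lemma for the power-of-two cycle: merging A_k^i with A_k^{i+2^{k-1}}. -/
theorem stmt7 (m : ℕ) (hm : 1 ≤ m) (x : ZMod (2^m) → ℝ)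
    (A : ℕ → ZMod (2^m) → Finset (ZMod (2^m)))
    (hA : ∀ k i, A k i
      = Finset.image (fun j : ℕ => i + ((j * 2^k : ℕ) : ZMod (2^m))) (Finset.range (2^(m-k))))
    (hne : ∀ k i, (A k i).Nonempty)
    (i : ZMod (2^m)) (k : ℕ) (hk1 : 1 ≤ k) (hk2 : k ≤ m) :
    2 * ((A (k-1) i).sup' (hne _ _) x - (A (k-1) i).inf' (hne _ _) x) ≤
      2 * (A (k-1) i).sup' (hne _ _) (fun j => |x j - x (j + ((2^(k-1) : ℕ) : ZMod (2^m)))|) +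
      ((A k (i + ((2^(k-1) : ℕ) : ZMod (2^m)))).sup' (hne _ _) x
        - (A k (i + ((2^(k-1) : ℕ) : ZMod (2^m)))).inf' (hne _ _) x) +
      ((A k i).sup' (hne _ _) x - (A k i).inf' (hne _ _) x) :=
  stmt7_general m x A hA hne i k hk1 hk2
end

section
/- For a cycle of length n = 2^m, load vector x : ZMod n → ℝ, and 0 ≤ k ≤ m-1: ∑_{i ∈ ZMod n} max_{j ∈ A_k^i} |x(j) - x(j + 2^k)| ≤ (n/√(2^k))·√(φ_{2^k}(x)), where φ_{2^k}(x) = ∑_{j ∈ ZMod n} (x(j) - x(j + 2^k))². -/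
/-!
Each maximum over `A_k^i` is at most `√(∑_{j ∈ A_k^i} d_j²)`, where `d_j = x j - x (j + 2^k)`.
Cauchy–Schwarz over the `n` indices `i` bounds the sum of these roots by `√n · √(∑_i ∑_{j ∈ A_k^i} d_j²)`.
Since `j ∈ A_k^i` forces `i ∈ A_k^j`, every `j` is counted in at most `|A_k^j| ≤ 2^(m-k)` inner sums,
so the double sum is at most `2^(m-k) φ_{2^k}(x)`, and `√n · √(2^(m-k)) = n / √(2^k)`.
-/

open Finset

lemma Finset.sup'_abs_le_sqrt_sum_sq {ι : Type*} (s : Finset ι) (hs : s.Nonempty) (f : ι → ℝ) :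
    s.sup' hs (fun j => |f j|) ≤ √(∑ j ∈ s, f j ^ 2) :=
  sup'_le _ _ fun j hj => by
    rw [← Real.sqrt_sq_eq_abs]
    exact Real.sqrt_le_sqrt (single_le_sum (fun a _ => sq_nonneg (f a)) hj)

lemma Real.sum_sqrt_le_sqrt_card_mul_sqrt_sum {ι : Type*} (s : Finset ι) {f : ι → ℝ}
    (hf : ∀ i, 0 ≤ f i) : ∑ i ∈ s, √(f i) ≤ √(#s) * √(∑ i ∈ s, f i) := by
  simpa using Real.sum_sqrt_mul_sqrt_le s (f := fun _ => 1) (fun _ => zero_le_one) hf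

lemma Finset.sum_sum_le_mul_sum_of_symm {ι : Type*} [Fintype ι] [DecidableEq ι]
    (B : ι → Finset ι) {c : ℕ} (hsymm : ∀ i j, j ∈ B i → i ∈ B j) (hcard : ∀ j, #(B j) ≤ c)
    {g : ι → ℝ} (hg : ∀ j, 0 ≤ g j) :
    ∑ i, ∑ j ∈ B i, g j ≤ c * ∑ j, g j := by
  rw [sum_comm' (t' := univ) (s' := fun j => {i | j ∈ B i}) (by simp), mul_sum]
  refine sum_le_sum fun j _ => ?_
  rw [sum_const, nsmul_eq_mul]
  have hfibre : #{i | j ∈ B i} ≤ c :=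
    (card_le_card fun i hi => hsymm i j (mem_filter.1 hi).2).trans (hcard j)
  exact mul_le_mul_of_nonneg_right (by exact_mod_cast hfibre) (hg j)

/-- The paper's `A_k^i` is `cyclicProgression i (2^k) (2^(m-k))`. -/
def cyclicProgression {n : ℕ} (i : ZMod n) (s c : ℕ) : Finset (ZMod n) :=
  image (fun t : ℕ => i + ((t * s : ℕ) : ZMod n)) (range c)

lemma card_cyclicProgression_le {n : ℕ} (i : ZMod n) (s c : ℕ) :
    #(cyclicProgression i s c) ≤ c :=
  card_image_le.trans (card_range c).le

lemma mem_cyclicProgression_comm {n s c : ℕ} (hcs : ((c * s : ℕ) : ZMod n) = 0)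
    {i j : ZMod n} (hj : j ∈ cyclicProgression i s c) : i ∈ cyclicProgression j s c := by
  simp only [cyclicProgression, mem_image, mem_range] at hj ⊢
  obtain ⟨t, ht, rfl⟩ := hj
  rcases Nat.eq_zero_or_pos t with rfl | htpos
  · exact ⟨0, by omega, by simp⟩
  · refine ⟨c - t, by omega, ?_⟩
    rw [add_assoc, ← Nat.cast_add, ← Nat.add_mul, Nat.add_sub_cancel' ht.le, hcs, add_zero]

lemma sqrt_two_pow_mul_sqrt_two_pow_sub {m k : ℕ} (hkm : k ≤ m) :
    √(2 ^ m) * √(2 ^ (m - k)) = 2 ^ m / √(2 ^ k) := by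
  rw [eq_div_iff (by positivity), mul_assoc, ← Real.sqrt_mul (by positivity), ← pow_add,
    Nat.sub_add_cancel hkm, Real.mul_self_sqrt (by positivity)]

theorem stmt8_general (n m : ℕ) [NeZero n] (hn : n = 2^m) (x : ZMod n → ℝ)
    (A : ℕ → ZMod n → Finset (ZMod n))
    (hA : ∀ k i, A k i
      = Finset.image (fun j : ℕ => i + ((j * 2^k : ℕ) : ZMod n)) (Finset.range (2^(m-k))))
    (hne : ∀ k i, (A k i).Nonempty)
    (k : ℕ) (hk : k ≤ m - 1) :
    ∑ i : ZMod n, (A k i).sup' (hne k i) (fun j => |x j - x (j + ((2^k : ℕ) : ZMod n))|) ≤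
      ((n : ℝ) / Real.sqrt (2^k))
        * Real.sqrt (∑ j : ZMod n, (x j - x (j + ((2^k : ℕ) : ZMod n)))^2) := by
  have hkm : k ≤ m := hk.trans (Nat.sub_le m 1)
  have hAk : ∀ i, A k i = cyclicProgression i (2 ^ k) (2 ^ (m - k)) := hA k
  have hperiod : ((2 ^ (m - k) * 2 ^ k : ℕ) : ZMod n) = 0 := by
    rw [← pow_add, Nat.sub_add_cancel hkm, ← hn, ZMod.natCast_self]
  have hsymm : ∀ i j, j ∈ A k i → i ∈ A k j := fun i j => by
    rw [hAk, hAk]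
    exact mem_cyclicProgression_comm hperiod
  have hcard : ∀ j, #(A k j) ≤ 2 ^ (m - k) := fun j => hAk j ▸ card_cyclicProgression_le _ _ _
  set d : ZMod n → ℝ := fun j => x j - x (j + ((2^k : ℕ) : ZMod n))
  calc ∑ i, (A k i).sup' (hne k i) (fun j => |d j|)
      ≤ ∑ i, √(∑ j ∈ A k i, d j ^ 2) :=
        sum_le_sum fun i _ => (A k i).sup'_abs_le_sqrt_sum_sq (hne k i) d
    _ ≤ √n * √(∑ i, ∑ j ∈ A k i, d j ^ 2) := by
        simpa using Real.sum_sqrt_le_sqrt_card_mul_sqrt_sum (univ : Finset (ZMod n))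
          (fun i => sum_nonneg fun j _ => sq_nonneg (d j))
    _ ≤ √n * √(2 ^ (m - k) * ∑ j, d j ^ 2) := by
        gcongr
        exact_mod_cast sum_sum_le_mul_sum_of_symm (A k) hsymm hcard fun j => sq_nonneg (d j)
    _ = n / √(2 ^ k) * √(∑ j, d j ^ 2) := by
        have hn' : (n : ℝ) = 2 ^ m := by exact_mod_cast hn
        rw [Real.sqrt_mul (by positivity), ← mul_assoc, hn', sqrt_two_pow_mul_sqrt_two_pow_sub hkm]

/-- Sum of maximal 2^k-hop differences over the sets A_k^i is bounded via the hop potential. -/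
theorem stmt8 (n m : ℕ) [NeZero n] (hn : n = 2^m) (hm : 1 ≤ m) (x : ZMod n → ℝ)
    (A : ℕ → ZMod n → Finset (ZMod n))
    (hA : ∀ k i, A k i
      = Finset.image (fun j : ℕ => i + ((j * 2^k : ℕ) : ZMod n)) (Finset.range (2^(m-k))))
    (hne : ∀ k i, (A k i).Nonempty)
    (k : ℕ) (hk : k ≤ m - 1) :
    ∑ i : ZMod n, (A k i).sup' (hne k i) (fun j => |x j - x (j + ((2^k : ℕ) : ZMod n))|) ≤
      ((n : ℝ) / Real.sqrt (2^k))
        * Real.sqrt (∑ j : ZMod n, (x j - x (j + ((2^k : ℕ) : ZMod n)))^2) :=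
  stmt8_general n m hn x A hA hne k hk
end

section
/- For a cycle of length n = 2^m and load vector x : ZMod n → ℝ: n·Gap(x) ≤ √n·√(φ_{n/2}(x)) + ∑_{k=1}^{m-1} (n/√(2^{k-1}))·√(φ_{2^{k-1}}(x)), where Gap(x) = max_i x(i) - min_i x(i) and φ_d(x) = ∑_i (x(i) - x(i+d))². -/
/-!
Let `A_k(i)` be the average of `x` over the window of length `2^k` starting at `i`, so that
`A_0 = x` and `A_m` is the mean of `x`. With `d = 2^k`, `A_k(i) - A_{k+1}(i)` is half the average
of the `d`-hop differences over that window, hence by Cauchy–Schwarz at most `√E / (2√d)`, where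
`E` is the `d`-hop energy of the window. This energy is at most `φ_d`, and for `d = n/2` it is
exactly `φ_d / 2`, because the `n/2`-hop differences are `n/2`-periodic up to sign. Telescoping
bounds every `|x i - mean|`, and the gap is at most twice that bound.
-/

open Finset

lemma abs_sum_le_sqrt_card_mul_sqrt_sum_sq {ι : Type*} (s : Finset ι) (f : ι → ℝ) :
    |∑ i ∈ s, f i| ≤ √(#s) * √(∑ i ∈ s, f i ^ 2) := by
  rw [← Real.sqrt_mul (Nat.cast_nonneg _), ← Real.sqrt_sq_eq_abs]
  exact Real.sqrt_le_sqrt sq_sum_le_card_mul_sum_sq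

namespace CycleGap

variable {n : ℕ}

def windowSum (x : ZMod n → ℝ) (d : ℕ) (i : ZMod n) : ℝ :=
  ∑ t ∈ range d, x (i + t)

def hopPotential [NeZero n] (x : ZMod n → ℝ) (d : ℕ) : ℝ :=
  ∑ i, (x i - x (i + d)) ^ 2

def localHopPotential (x : ZMod n → ℝ) (d : ℕ) (i : ZMod n) : ℝ :=
  windowSum (fun j => (x j - x (j + d)) ^ 2) d i

lemma windowSum_add (x : ZMod n → ℝ) (a b : ℕ) (i : ZMod n) :
    windowSum x (a + b) i = windowSum x a i + windowSum x b (i + a) := by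
  simp only [windowSum, sum_range_add, Nat.cast_add, add_assoc]

lemma windowSum_sub_windowSum_add (x : ZMod n → ℝ) (d : ℕ) (i : ZMod n) :
    windowSum x d i - windowSum x d (i + d) = ∑ t ∈ range d, (x (i + t) - x (i + t + d)) := by
  simp only [windowSum, ← sum_sub_distrib, add_right_comm]

lemma injOn_add_natCast (i : ZMod n) : Set.InjOn (fun t : ℕ => i + t) (Set.Iio n) := by
  intro a ha b hb hab
  have := (ZMod.natCast_eq_natCast_iff' a b n).1 (add_left_cancel hab)
  rwa [Nat.mod_eq_of_lt ha, Nat.mod_eq_of_lt hb] at this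

lemma windowSum_eq_sum_image {d : ℕ} (hd : d ≤ n) (g : ZMod n → ℝ) (i : ZMod n) :
    windowSum g d i = ∑ j ∈ (range d).image (fun t : ℕ => i + t), g j := by
  refine (sum_image fun a ha b hb hab => ?_).symm
  exact injOn_add_natCast i ((mem_range.1 ha).trans_le hd) ((mem_range.1 hb).trans_le hd) hab

lemma windowSum_le_sum [NeZero n] {d : ℕ} (hd : d ≤ n) {g : ZMod n → ℝ} (hg : 0 ≤ g)
    (i : ZMod n) : windowSum g d i ≤ ∑ j, g j := by
  rw [windowSum_eq_sum_image hd]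
  exact sum_le_sum_of_subset_of_nonneg (subset_univ _) fun j _ _ => hg j

lemma windowSum_self [NeZero n] (g : ZMod n → ℝ) (i : ZMod n) :
    windowSum g n i = ∑ j, g j := by
  rw [windowSum_eq_sum_image le_rfl]
  congr
  refine eq_univ_of_card _ ?_
  rw [card_image_of_injOn, card_range, ZMod.card]
  exact (injOn_add_natCast i).mono (by simp)

lemma localHopPotential_le_hopPotential [NeZero n] (x : ZMod n → ℝ) {d : ℕ} (hd : d ≤ n)
    (i : ZMod n) : localHopPotential x d i ≤ hopPotential x d :=
  windowSum_le_sum hd (fun _ => sq_nonneg _) i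

lemma hopPotential_eq_two_mul_localHopPotential [NeZero n] (x : ZMod n → ℝ) {d : ℕ}
    (hd : d + d = n) (i : ZMod n) : hopPotential x d = 2 * localHopPotential x d i := by
  have hdd : (d : ZMod n) + d = 0 := by rw [← Nat.cast_add, hd, ZMod.natCast_self]
  have hperiodic : ∀ j : ZMod n, (x (j + d) - x (j + d + d)) ^ 2 = (x j - x (j + d)) ^ 2 := by
    intro j
    rw [add_assoc, hdd, add_zero, ← neg_sub, neg_sq]
  subst hd
  rw [hopPotential, ← windowSum_self _ i, windowSum_add, two_mul, localHopPotential]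
  refine congrArg _ (sum_congr rfl fun t _ => ?_)
  dsimp only
  rw [add_right_comm i, hperiodic]

lemma abs_windowSum_div_sub_le (x : ZMod n → ℝ) (d : ℕ) (i : ZMod n) :
    |windowSum x d i / d - windowSum x (2 * d) i / (2 * d : ℕ)| ≤
      √(localHopPotential x d i) / (2 * √d) := by
  rcases d.eq_zero_or_pos with rfl | hd
  · simp [windowSum]
  have hsplit : windowSum x d i / d - windowSum x (2 * d) i / (2 * d : ℕ)
      = (∑ t ∈ range d, (x (i + t) - x (i + t + d))) / (2 * d) := by
    rw [two_mul, windowSum_add, ← windowSum_sub_windowSum_add]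
    push_cast
    field_simp
    ring
  have hCS := abs_sum_le_sqrt_card_mul_sqrt_sum_sq (range d) fun t => x (i + t) - x (i + t + d)
  rw [card_range] at hCS
  rw [hsplit, abs_div, abs_of_nonneg (by positivity : (0 : ℝ) ≤ 2 * d)]
  calc _ ≤ √d * √(localHopPotential x d i) / (2 * d) := by gcongr; exact hCS
    _ = _ := by
      have hsq := Real.sq_sqrt (Nat.cast_nonneg (α := ℝ) d)
      have hpos : 0 < √(d : ℝ) := by positivity
      field_simp
      rw [hsq, mul_comm]

lemma abs_sub_windowSum_two_pow_div_le (x : ZMod n → ℝ) (m : ℕ) (i : ZMod n) :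
    |x i - windowSum x (2 ^ m) i / (2 ^ m : ℕ)| ≤
      ∑ k ∈ range m, √(localHopPotential x (2 ^ k) i) / (2 * √(2 ^ k : ℕ)) := by
  have htelescope := sum_range_sub' (fun k => windowSum x (2 ^ k) i / (2 ^ k : ℕ)) m
  simp only [pow_zero, windowSum, range_one, sum_singleton, Nat.cast_zero, add_zero,
    Nat.cast_one, div_one] at htelescope
  rw [windowSum, ← htelescope]
  refine (abs_sum_le_sum_abs _ _).trans (sum_le_sum fun k _ => ?_)
  rw [pow_succ']
  exact abs_windowSum_div_sub_le x (2 ^ k) i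

lemma abs_sub_mean_le [NeZero n] (x : ZMod n → ℝ) {M : ℕ} (hn : n = 2 ^ (M + 1))
    (i : ZMod n) :
    |x i - (∑ j, x j) / n| ≤
      (√(hopPotential x (2 ^ M)) / √n +
        ∑ k ∈ range M, √(hopPotential x (2 ^ k)) / √(2 ^ k)) / 2 := by
  have h := abs_sub_windowSum_two_pow_div_le x (M + 1) i
  rw [← hn, windowSum_self, sum_range_succ] at h
  refine h.trans ?_
  rw [add_div, sum_div, add_comm (√(hopPotential x (2 ^ M)) / √n / 2)]
  refine add_le_add (sum_le_sum fun k hk => ?_) (le_of_eq ?_)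
  · have hk : 2 ^ k ≤ n := hn ▸ Nat.pow_le_pow_right two_pos (by grind)
    rw [div_div, mul_comm _ (2 : ℝ), Nat.cast_pow, Nat.cast_ofNat]
    gcongr
    exact localHopPotential_le_hopPotential x hk i
  · have hM : 2 ^ M + 2 ^ M = n := by rw [hn, pow_succ, mul_two]
    have hnR : (n : ℝ) = 2 * 2 ^ M := by rw [← hM]; push_cast; ring
    rw [hopPotential_eq_two_mul_localHopPotential x hM i, hnR, Nat.cast_pow, Nat.cast_ofNat,
      Real.sqrt_mul zero_le_two, Real.sqrt_mul zero_le_two]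
    field_simp

lemma sub_le_of_card_eq_two_pow [NeZero n] (x : ZMod n → ℝ) {M : ℕ} (hn : n = 2 ^ (M + 1))
    (i j : ZMod n) :
    x i - x j ≤
      √(hopPotential x (2 ^ M)) / √n + ∑ k ∈ range M, √(hopPotential x (2 ^ k)) / √(2 ^ k) := by
  have hi := abs_le.1 (abs_sub_mean_le x hn i)
  have hj := abs_le.1 (abs_sub_mean_le x hn j)
  linarith [hi.2, hj.1]

end CycleGap

open CycleGap in
/-- Gap covering bound: n·Gap(x) ≤ √n·√(φ_{n/2}) + ∑_{k=1}^{m-1} (n/√(2^{k-1}))·√(φ_{2^{k-1}}). -/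
theorem stmt9 (n m : ℕ) [NeZero n] (hn : n = 2^m) (hm : 1 ≤ m) (x : ZMod n → ℝ)
    (φ : ℕ → ℝ) (hφ : ∀ d, φ d = ∑ i : ZMod n, (x i - x (i + (d : ZMod n)))^2) :
    (n : ℝ) * (Finset.univ.sup' Finset.univ_nonempty x
        - Finset.univ.inf' Finset.univ_nonempty x) ≤
      Real.sqrt n * Real.sqrt (φ (n/2)) +
      ∑ k ∈ Finset.Icc 1 (m-1),
        ((n : ℝ) / Real.sqrt (2^(k-1))) * Real.sqrt (φ (2^(k-1))) := by
  obtain ⟨M, rfl⟩ : ∃ M, m = M + 1 := ⟨m - 1, by omega⟩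
  obtain rfl : φ = hopPotential x := funext hφ
  obtain ⟨imax, -, hmax⟩ := exists_mem_eq_sup' univ_nonempty x
  obtain ⟨imin, -, hmin⟩ := exists_mem_eq_inf' univ_nonempty x
  have hhalf : n / 2 = 2 ^ M := by rw [hn, pow_succ, Nat.mul_div_cancel _ two_pos]
  have hreindex : ∑ k ∈ Icc 1 M, (n : ℝ) / √(2 ^ (k - 1)) * √(hopPotential x (2 ^ (k - 1))) =
      ∑ k ∈ range M, (n : ℝ) * (√(hopPotential x (2 ^ k)) / √(2 ^ k)) := by
    rw [← Ico_add_one_right_eq_Icc, sum_Ico_eq_sum_range, Nat.add_sub_cancel]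
    simp only [Nat.add_sub_cancel_left, mul_div_assoc', div_mul_eq_mul_div]
  rw [hmax, hmin, hhalf, Nat.add_sub_cancel, hreindex, ← mul_sum]
  calc (n : ℝ) * (x imax - x imin)
      ≤ n * (√(hopPotential x (2 ^ M)) / √n +
          ∑ k ∈ range M, √(hopPotential x (2 ^ k)) / √(2 ^ k)) :=
        mul_le_mul_of_nonneg_left (sub_le_of_card_eq_two_pow x hn imax imin) (by positivity)
    _ = _ := by rw [mul_add, mul_div_left_comm, Real.div_sqrt, mul_comm]
end

section
/- Define sequences of vectors Δ_k ∈ ℕ^{2^k} by Δ_0 = (n), and Δ_k = (α_k, δ_{k-1}^1 - α_k, α_k, δ_{k-1}^2 - α_k, …, α_k, δ_{k-1}^{2^{k-1}} - α_k), where α_k = ⌊n/2^{k-1}⌋/2 if ⌊n/2^{k-1}⌋ is even and α_k = ⌊⌈n/2^{k-1}⌉/2⌋ otherwise. Then for every 1 ≤ k ≤ ⌊log₂ n⌋: (1) the entries of Δ_k sum to n, and (2) every entry of Δ_k lies in {⌊n/2^k⌋, ⌈n/2^k⌉}. -/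
/-!
Write `q = ⌊n/p⌋` and `c = ⌈n/p⌉ ∈ {q, q + 1}`; then `⌊n/2p⌋ = ⌊q/2⌋` and `⌈n/2p⌉ = ⌈c/2⌉`.
The rule defining `α` is chosen so that `α`, `q - α` and `c - α` all lie in
`{⌊q/2⌋, ⌈c/2⌉}`, and `α ≤ q` so that no subtraction truncates. Hence, by induction on `k`,
splitting each entry `x` of `Δ_k` into `α, x - α` preserves the total and produces entries that
round `n / 2^(k+1)` up or down.
-/

open Finset

def IsRoundedDiv (n p x : ℕ) : Prop := x = n / p ∨ x = (n + p - 1) / p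

/-- The paper's `α_{k+1}`, for `p = 2^k`. -/
def halfShare (n p : ℕ) : ℕ := if n / p % 2 = 0 then n / p / 2 else (n + p - 1) / p / 2

lemma add_sub_one_div_eq_or {n p : ℕ} (hp : 0 < p) :
    (n + p - 1) / p = n / p ∨ (n + p - 1) / p = n / p + 1 := by
  have hlow : n / p ≤ (n + p - 1) / p := Nat.div_le_div_right (by omega)
  have hhigh : (n + p - 1) / p ≤ n / p + 1 :=
    calc (n + p - 1) / p ≤ (n + p) / p := Nat.div_le_div_right (by omega)
      _ = n / p + 1 := Nat.add_div_right n hp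
  omega

lemma add_two_mul_sub_one_div {n p : ℕ} (hp : 0 < p) :
    (n + 2 * p - 1) / (2 * p) = ((n + p - 1) / p + 1) / 2 := by
  rw [← Nat.add_div_right _ hp, Nat.div_div_eq_div_mul, mul_comm p 2]
  congr 1
  omega

lemma halfShare_le_and_isRoundedDiv {n p x : ℕ} (hp : 0 < p) (hx : IsRoundedDiv n p x) :
    halfShare n p ≤ x ∧ IsRoundedDiv n (2 * p) (halfShare n p) ∧
      IsRoundedDiv n (2 * p) (x - halfShare n p) := by
  have hfloor : n / (2 * p) = n / p / 2 := by rw [mul_comm, Nat.div_div_eq_div_mul]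
  have hceil := add_two_mul_sub_one_div (n := n) hp
  have hc := add_sub_one_div_eq_or (n := n) hp
  unfold IsRoundedDiv halfShare at *
  rw [hfloor, hceil]
  generalize n / p = q at *
  generalize (n + p - 1) / p = c at *
  split_ifs <;> omega

lemma sum_Icc_one_two_mul {M : Type*} [AddCommMonoid M] (f : ℕ → M) (m : ℕ) :
    ∑ j ∈ Icc 1 (2 * m), f j = ∑ j ∈ Icc 1 m, (f (2 * j - 1) + f (2 * j)) := by
  induction m with
  | zero => simp
  | succ m ih =>
    have htop : 2 * (m + 1) = 2 * m + 1 + 1 := by ring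
    rw [sum_Icc_succ_top (by omega : 1 ≤ m + 1), ← ih, htop, sum_Icc_succ_top (by omega),
      sum_Icc_succ_top (by omega), add_assoc, Nat.add_sub_cancel]

section Split

variable {n p m : ℕ} {d e : ℕ → ℕ}

lemma sum_split_eq (hp : 0 < p) (hd : ∀ j, 1 ≤ j → j ≤ m → IsRoundedDiv n p (d j))
    (he : ∀ j, 1 ≤ j → j ≤ m →
      e (2 * j - 1) = halfShare n p ∧ e (2 * j) = d j - halfShare n p) :
    ∑ j ∈ Icc 1 (2 * m), e j = ∑ j ∈ Icc 1 m, d j := by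
  rw [sum_Icc_one_two_mul]
  refine sum_congr rfl fun j hj => ?_
  rw [mem_Icc] at hj
  obtain ⟨hodd, heven⟩ := he j hj.1 hj.2
  have hle := (halfShare_le_and_isRoundedDiv hp (hd j hj.1 hj.2)).1
  omega

lemma isRoundedDiv_split (hp : 0 < p) (hd : ∀ j, 1 ≤ j → j ≤ m → IsRoundedDiv n p (d j))
    (he : ∀ j, 1 ≤ j → j ≤ m →
      e (2 * j - 1) = halfShare n p ∧ e (2 * j) = d j - halfShare n p) :
    ∀ j, 1 ≤ j → j ≤ 2 * m → IsRoundedDiv n (2 * p) (e j) := by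
  intro j h1 h2
  obtain ⟨i, hi1, hi2, rfl | rfl⟩ : ∃ i, 1 ≤ i ∧ i ≤ m ∧ (j = 2 * i - 1 ∨ j = 2 * i) :=
    ⟨(j + 1) / 2, by omega, by omega, by omega⟩
  · obtain ⟨-, hshare, -⟩ := halfShare_le_and_isRoundedDiv hp (hd i hi1 hi2)
    rwa [(he i hi1 hi2).1]
  · obtain ⟨-, -, hrest⟩ := halfShare_le_and_isRoundedDiv hp (hd i hi1 hi2)
    rwa [(he i hi1 hi2).2]

end Split

theorem stmt12_general (n : ℕ)
    (α : ℕ → ℕ)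
    (hα : ∀ k, α k = if (n / 2^(k-1)) % 2 = 0
      then (n / 2^(k-1)) / 2
      else ((n + 2^(k-1) - 1) / 2^(k-1)) / 2)
    (δ : ℕ → ℕ → ℕ)
    (hδ0 : δ 0 1 = n)
    (hδ : ∀ k j, 1 ≤ k → 1 ≤ j → j ≤ 2^(k-1) →
      δ k (2*j - 1) = α k ∧ δ k (2*j) = δ (k-1) j - α k) :
    ∀ k, 1 ≤ k → k ≤ Nat.log 2 n →
      (∑ j ∈ Finset.Icc 1 (2^k), δ k j = n) ∧
      (∀ j, 1 ≤ j → j ≤ 2^k → δ k j = n / 2^k ∨ δ k j = (n + 2^k - 1) / 2^k) := by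
  suffices h : ∀ k, (∑ j ∈ Icc 1 (2 ^ k), δ k j = n) ∧
      ∀ j, 1 ≤ j → j ≤ 2 ^ k → IsRoundedDiv n (2 ^ k) (δ k j) from fun k _ _ => h k
  intro k
  induction k with
  | zero =>
    refine ⟨by simpa using hδ0, fun j h1 h2 => ?_⟩
    obtain rfl : j = 1 := by simp only [pow_zero] at h2; omega
    simp [IsRoundedDiv, hδ0]
  | succ k ih =>
    obtain ⟨hsum, hround⟩ := ih
    have hp : 0 < 2 ^ k := by positivity
    have hnext : ∀ j, 1 ≤ j → j ≤ 2 ^ k → δ (k + 1) (2 * j - 1) = halfShare n (2 ^ k) ∧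
        δ (k + 1) (2 * j) = δ k j - halfShare n (2 ^ k) := fun j h1 h2 => by
      simpa [hα, halfShare] using hδ (k + 1) j (by omega) h1 h2
    rw [pow_succ']
    exact ⟨(sum_split_eq hp hround hnext).trans hsum, isRoundedDiv_split hp hround hnext⟩

/-- The recursive halving construction Δ_k sums to n and has entries in {⌊n/2^k⌋, ⌈n/2^k⌉}. -/
theorem stmt12 (n : ℕ) (hn : 2 ≤ n)
    (α : ℕ → ℕ)
    (hα : ∀ k, α k = if (n / 2^(k-1)) % 2 = 0
      then (n / 2^(k-1)) / 2
      else ((n + 2^(k-1) - 1) / 2^(k-1)) / 2)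
    (δ : ℕ → ℕ → ℕ)
    (hδ0 : δ 0 1 = n)
    (hδ : ∀ k j, 1 ≤ k → 1 ≤ j → j ≤ 2^(k-1) →
      δ k (2*j - 1) = α k ∧ δ k (2*j) = δ (k-1) j - α k) :
    ∀ k, 1 ≤ k → k ≤ Nat.log 2 n →
      (∑ j ∈ Finset.Icc 1 (2^k), δ k j = n) ∧
      (∀ j, 1 ≤ j → j ≤ 2^k → δ k j = n / 2^k ∨ δ k j = (n + 2^k - 1) / 2^k) :=
  stmt12_general n α hα δ hδ0 hδ
end

section
/- Let x : ZMod n → ℝ, and let A, B be disjoint nonempty subsets of ZMod n and α ∈ ZMod n be such that for every u ∈ A ∪ B there exists v in the other set with v = u + α or u = v + α. Then 2·Gap_{A∪B}(x) ≤ 2·max_{j ∈ A∪B} |x(j) - x(j+α)| + Gap_A(x) + Gap_B(x). -/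
/-!
Let `D` be the largest jump `|x j - x (j + α)|` over `j ∈ A ∪ B`. The pairing gives every point of
`A` a partner in `B` where `x` differs by at most `D`, and vice versa, so the maxima `a, b` of `x`
on `A` and on `B` differ by at most `D`, and so do the minima `c, d`. Hence
`2 max a b ≤ a + b + D` and `2 min c d ≥ c + d - D`; subtracting gives the bound.
-/

namespace Finset

theorem sup'_le_sup'_add_of_forall_exists {ι β : Type*} [Add β] [LinearOrder β]
    [AddRightMono β] {A B : Finset ι} (hA : A.Nonempty) (hB : B.Nonempty) {x : ι → β}
    {D : β} (h : ∀ u ∈ A, ∃ v ∈ B, x u ≤ x v + D) :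
    A.sup' hA x ≤ B.sup' hB x + D :=
  sup'_le hA x fun u hu ↦ by
    obtain ⟨v, hv, huv⟩ := h u hu
    exact huv.trans (add_le_add_left (le_sup' x hv) D)

theorem inf'_le_inf'_add_of_forall_exists {ι β : Type*} [Add β] [LinearOrder β]
    {A B : Finset ι} (hA : A.Nonempty) (hB : B.Nonempty) {x : ι → β} {D : β}
    (h : ∀ u ∈ A, ∃ v ∈ B, x v ≤ x u + D) :
    B.inf' hB x ≤ A.inf' hA x + D := by
  obtain ⟨u, hu, hxu⟩ := A.exists_mem_eq_inf' hA x
  obtain ⟨v, hv, hvu⟩ := h u hu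
  rw [hxu]
  exact (inf'_le x hv).trans hvu

theorem two_mul_sup'_union_sub_inf'_union_le {ι : Type*} [DecidableEq ι] {A B : Finset ι}
    (hA : A.Nonempty) (hB : B.Nonempty) (hUn : (A ∪ B).Nonempty) {x : ι → ℝ} {D : ℝ}
    (hAB : ∀ u ∈ A, ∃ v ∈ B, |x u - x v| ≤ D) (hBA : ∀ u ∈ B, ∃ v ∈ A, |x u - x v| ≤ D) :
    2 * ((A ∪ B).sup' hUn x - (A ∪ B).inf' hUn x) ≤
      2 * D + (A.sup' hA x - A.inf' hA x) + (B.sup' hB x - B.inf' hB x) := by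
  have above {S T : Finset ι} (h : ∀ u ∈ S, ∃ v ∈ T, |x u - x v| ≤ D) :
      ∀ u ∈ S, ∃ v ∈ T, x u ≤ x v + D :=
    fun u hu ↦ (h u hu).imp fun _ ⟨hv, huv⟩ ↦ ⟨hv, by linarith [abs_le.mp huv]⟩
  have below {S T : Finset ι} (h : ∀ u ∈ S, ∃ v ∈ T, |x u - x v| ≤ D) :
      ∀ u ∈ S, ∃ v ∈ T, x v ≤ x u + D :=
    fun u hu ↦ (h u hu).imp fun _ ⟨hv, huv⟩ ↦ ⟨hv, by linarith [abs_le.mp huv]⟩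
  have hsupA := sup'_le_sup'_add_of_forall_exists hA hB (above hAB)
  have hsupB := sup'_le_sup'_add_of_forall_exists hB hA (above hBA)
  have hinfA := inf'_le_inf'_add_of_forall_exists hA hB (below hAB)
  have hinfB := inf'_le_inf'_add_of_forall_exists hB hA (below hBA)
  rw [sup'_union hA hB, inf'_union hA hB]
  rcases le_total (A.sup' hA x) (B.sup' hB x) with hs | hs <;>
    rcases le_total (A.inf' hA x) (B.inf' hB x) with hi | hi <;>
    simp only [sup_of_le_left, sup_of_le_right, inf_of_le_left, inf_of_le_right, hs, hi] <;>
    linarith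

theorem abs_sub_le_sup'_of_hop {G : Type*} [Add G] {S : Finset G} (hS : S.Nonempty)
    (x : G → ℝ) {α u v : G} (hu : u ∈ S) (hv : v ∈ S) (huv : v = u + α ∨ u = v + α) :
    |x u - x v| ≤ S.sup' hS (fun j ↦ |x j - x (j + α)|) := by
  rcases huv with rfl | rfl
  · exact le_sup' (fun j ↦ |x j - x (j + α)|) hu
  · rw [abs_sub_comm]
    exact le_sup' (fun j ↦ |x j - x (j + α)|) hv

end Finset

theorem stmt15_general (n : ℕ) (x : ZMod n → ℝ)
    (A B : Finset (ZMod n)) (hA : A.Nonempty) (hB : B.Nonempty)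
    (α : ZMod n)
    (hAB : ∀ u ∈ A, ∃ v ∈ B, v = u + α ∨ u = v + α)
    (hBA : ∀ u ∈ B, ∃ v ∈ A, v = u + α ∨ u = v + α)
    (hUn : (A ∪ B).Nonempty) :
    2 * ((A ∪ B).sup' hUn x - (A ∪ B).inf' hUn x) ≤
      2 * (A ∪ B).sup' hUn (fun j => |x j - x (j + α)|) +
      (A.sup' hA x - A.inf' hA x) + (B.sup' hB x - B.inf' hB x) := by
  refine Finset.two_mul_sup'_union_sub_inf'_union_le hA hB hUn ?_ ?_
  · exact fun u hu ↦ (hAB u hu).imp fun v ⟨hv, huv⟩ ↦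
      ⟨hv, Finset.abs_sub_le_sup'_of_hop hUn x
        (Finset.mem_union_left B hu) (Finset.mem_union_right A hv) huv⟩
  · exact fun u hu ↦ (hBA u hu).imp fun v ⟨hv, huv⟩ ↦
      ⟨hv, Finset.abs_sub_le_sup'_of_hop hUn x
        (Finset.mem_union_right A hu) (Finset.mem_union_left B hv) huv⟩

/-- Merging two α-paired disjoint sets: bound on the gap of the union. -/
theorem stmt15 (n : ℕ) (x : ZMod n → ℝ)
    (A B : Finset (ZMod n)) (hA : A.Nonempty) (hB : B.Nonempty)
    (hdisj : Disjoint A B) (α : ZMod n)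
    (hAB : ∀ u ∈ A, ∃ v ∈ B, v = u + α ∨ u = v + α)
    (hBA : ∀ u ∈ B, ∃ v ∈ A, v = u + α ∨ u = v + α)
    (hUn : (A ∪ B).Nonempty) :
    2 * ((A ∪ B).sup' hUn x - (A ∪ B).inf' hUn x) ≤
      2 * (A ∪ B).sup' hUn (fun j => |x j - x (j + α)|) +
      (A.sup' hA x - A.inf' hA x) + (B.sup' hB x - B.inf' hB x) :=
  stmt15_general n x A B hA hB α hAB hBA hUn
end
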